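/- Let k be a field of characteristic 2 and let 1 ≤ m < n be positive integers. Let R = k[x_1,…,x_m,y_1,…,y_m] be viewed as a subring of S = k[x_1,…,x_n,y_1,…,y_n], and let 𝔫 = ({x_i, y_i : m+1 ≤ i ≤ n}) ⊆ S. Then for any ideals I and K of R, (I·S + 𝔫^{[2]}) ∩ (K·S + 𝔫^{[2]}) = (I ∩ K)·S + 𝔫^{[2]}, where I·S denotes the extension of I to S. -/

import Mathlib

/-
Splitting off the variables `x_i, y_i` with `i > m` identifies `S` with `R[x_i, y_i : i > m]`;
this turns `I·S` into `I[x_i, y_i]` and, Frobenius being additive in characteristic `2`, turns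
`𝔫^{[2]}` into the ideal generated by the squares of the new variables. Over any ring `R`, a
polynomial lies in `I[X] + (X_s ^ 2)` exactly when its coefficients at squarefree exponents lie
in `I`, and this coefficientwise condition commutes with intersections.
-/

open MvPolynomial

noncomputable section

namespace BEI

/-- The inclusion of polynomial rings
`k[x_1,…,x_m,y_1,…,y_m] → k[x_1,…,x_n,y_1,…,y_n]` (for `m ≤ n`) sending `x_i ↦ x_i`,
`y_i ↦ y_i`. -/
def incl (k : Type*) [CommRing k] (m n : ℕ) (h : m ≤ n) :
    MvPolynomial (Fin m ⊕ Fin m) k →+* MvPolynomial (Fin n ⊕ Fin n) k :=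
  (rename (Sum.map (Fin.castLE h) (Fin.castLE h))).toRingHom

/-- The Frobenius power `I^{[p]}`, the ideal generated by the `p`-th powers of all
elements of `I`. -/
def frobPow {A : Type*} [CommSemiring A] (I : Ideal A) (p : ℕ) : Ideal A :=
  Ideal.span ((· ^ p) '' (I : Set A))

/-- The ideal `𝔫 = ({x_i, y_i : m+1 ≤ i ≤ n})` of `k[x_1,…,x_n,y_1,…,y_n]`
(with `0`-based indexing: indices `i` with `m ≤ i`). -/
def nIdeal (k : Type*) [CommRing k] (m n : ℕ) : Ideal (MvPolynomial (Fin n ⊕ Fin n) k) :=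
  Ideal.span {g | ∃ i : Fin n, m ≤ (i : ℕ) ∧
    (g = X (Sum.inl i) ∨ g = X (Sum.inr i))}

theorem frobPow_span {A : Type*} [CommSemiring A] (p : ℕ) [ExpChar A p] (S : Set A) :
    frobPow (Ideal.span S) p = Ideal.span ((· ^ p) '' S) :=
  Ideal.map_span (frobenius A p) S

end BEI

namespace MvPolynomial

variable {R σ τ : Type*} [CommRing R]

variable (R σ) in
def powXIdeal (p : ℕ) : Ideal (MvPolynomial σ R) :=
  Ideal.span (Set.range fun s => X s ^ p)

theorem mem_powXIdeal_iff {p : ℕ} {f : MvPolynomial σ R} :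
    f ∈ powXIdeal R σ p ↔ ∀ d ∈ f.support, ∃ s, p ≤ d s := by
  have hgen : (Set.range fun s => (X s : MvPolynomial σ R) ^ p) =
      (fun d => monomial d (1 : R)) '' Set.range (Finsupp.single · p) := by
    simp only [← Set.range_comp, Function.comp_def, X_pow_eq_monomial]
  rw [powXIdeal, hgen, mem_ideal_span_monomial_image]
  simp [Finsupp.single_le_iff]

theorem mem_map_C_sup_powXIdeal_iff {p : ℕ} (I : Ideal R) (f : MvPolynomial σ R) :
    f ∈ I.map C ⊔ powXIdeal R σ p ↔ ∀ d : σ →₀ ℕ, (∀ s, d s < p) → coeff d f ∈ I := by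
  classical
  constructor
  · intro hf d hd
    obtain ⟨g, hg, h, hh, rfl⟩ := Submodule.mem_sup.mp hf
    have hd' : d ∉ h.support := fun hdh => by
      obtain ⟨s, hs⟩ := mem_powXIdeal_iff.mp hh d hdh
      exact (hd s).not_ge hs
    rw [coeff_add, notMem_support_iff.mp hd', add_zero]
    exact mem_map_C_iff.mp hg d
  · intro hf
    rw [as_sum f, ← Finset.sum_filter_add_sum_filter_not _ (fun d : σ →₀ ℕ => ∀ s, d s < p)]
    refine Submodule.add_mem_sup (Ideal.sum_mem _ fun d hd => ?_) (Ideal.sum_mem _ fun d hd => ?_)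
    · rw [← mul_one (coeff d f), ← C_mul_monomial]
      exact Ideal.mul_mem_right _ _ (Ideal.mem_map_of_mem C (hf d (Finset.mem_filter.mp hd).2))
    · refine mem_powXIdeal_iff.mpr fun d' hd' => ?_
      obtain rfl := Finset.mem_singleton.mp (support_monomial_subset hd')
      simpa using (Finset.mem_filter.mp hd).2

theorem map_C_sup_powXIdeal_inf {p : ℕ} (I K : Ideal R) :
    (I.map C ⊔ powXIdeal R σ p) ⊓ (K.map C ⊔ powXIdeal R σ p) =
      (I ⊓ K).map C ⊔ powXIdeal R σ p := by
  ext f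
  simp only [Submodule.mem_inf, mem_map_C_sup_powXIdeal_iff, ← forall_and]

open Classical in
def splitRangeEquiv (e : τ → σ) (he : Function.Injective e) :
    MvPolynomial σ R ≃ₐ[R] MvPolynomial ((Set.range e)ᶜ : Set σ) (MvPolynomial τ R) :=
  (renameEquiv R ((Equiv.Set.sumCompl (Set.range e)).symm.trans <| (Equiv.sumComm _ _).trans <|
    Equiv.sumCongr (Equiv.refl _) (Equiv.ofInjective e he).symm)).trans (sumAlgEquiv R _ τ)

theorem splitRangeEquiv_comp_rename {e : τ → σ} (he : Function.Injective e) :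
    (splitRangeEquiv e he).toAlgHom.comp (rename e) =
      IsScalarTower.toAlgHom R (MvPolynomial τ R) _ := by
  classical
  refine algHom_ext fun t => ?_
  simp [splitRangeEquiv, Equiv.Set.sumCompl_symm_apply_of_mem (Set.mem_range_self t)]

theorem splitRangeEquiv_X_compl {e : τ → σ} (he : Function.Injective e)
    (v : ((Set.range e)ᶜ : Set σ)) :
    splitRangeEquiv (R := R) e he (X v) = X v := by
  classical
  simp [splitRangeEquiv, Equiv.Set.sumCompl_symm_apply_of_notMem v.2]

theorem map_splitRangeEquiv_map_rename {e : τ → σ} (he : Function.Injective e)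
    (J : Ideal (MvPolynomial τ R)) :
    (J.map (rename e)).map (splitRangeEquiv e he) = J.map C := by
  have h := Ideal.map_mapₐ (I := J) (rename e) (splitRangeEquiv e he).toAlgHom
  rwa [splitRangeEquiv_comp_rename] at h

theorem map_splitRangeEquiv_frobPow_span_X {p : ℕ} [ExpChar R p] {e : τ → σ}
    (he : Function.Injective e) :
    (BEI.frobPow (Ideal.span (X '' (Set.range e)ᶜ)) p).map (splitRangeEquiv e he) =
      powXIdeal (MvPolynomial τ R) _ p := by
  simp only [BEI.frobPow_span, Ideal.map_span, Set.image_image, map_pow]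
  rw [Set.image_eq_range]
  simp only [splitRangeEquiv_X_compl he, powXIdeal]

end MvPolynomial

namespace BEI

theorem nIdeal_eq_span_X_compl_range (k : Type*) [CommRing k] {m n : ℕ} (h : m ≤ n) :
    nIdeal k m n = Ideal.span (X '' (Set.range (Sum.map (Fin.castLE h) (Fin.castLE h)))ᶜ) := by
  rw [nIdeal]
  congr 1
  ext g
  constructor
  · rintro ⟨i, hi, rfl | rfl⟩
    · refine ⟨.inl i, ?_, rfl⟩
      rintro ⟨j | j, hj⟩ <;> simp [Fin.ext_iff] at hj
      omega
    · refine ⟨.inr i, ?_, rfl⟩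
      rintro ⟨j | j, hj⟩ <;> simp [Fin.ext_iff] at hj
      omega
  · rintro ⟨i | i, hi, rfl⟩
    · exact ⟨i, not_lt.mp fun hlt => hi ⟨.inl ⟨i, hlt⟩, rfl⟩, .inl rfl⟩
    · exact ⟨i, not_lt.mp fun hlt => hi ⟨.inr ⟨i, hlt⟩, rfl⟩, .inr rfl⟩

theorem distributivity_intersection_with_sum_general (k : Type*) [Field k] [CharP k 2]
    (m n : ℕ) (hmn : m < n)
    (I K : Ideal (MvPolynomial (Fin m ⊕ Fin m) k)) :
    (Ideal.map (incl k m n hmn.le) I ⊔ frobPow (nIdeal k m n) 2) ⊓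
        (Ideal.map (incl k m n hmn.le) K ⊔ frobPow (nIdeal k m n) 2)
      = Ideal.map (incl k m n hmn.le) (I ⊓ K) ⊔ frobPow (nIdeal k m n) 2 := by
  have he : Function.Injective (Sum.map (Fin.castLE hmn.le) (Fin.castLE hmn.le)) :=
    Sum.map_injective.mpr ⟨Fin.castLE_injective _, Fin.castLE_injective _⟩
  let Φ := splitRangeEquiv (R := k) _ he
  have hΦ : ∀ J, Ideal.map Φ.toRingEquiv J = Ideal.map Φ J := fun _ => rfl
  have hincl : ∀ J, Ideal.map (incl k m n hmn.le) J = Ideal.map (rename _) J := fun _ => rfl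
  apply Φ.toRingEquiv.idealComapOrderIso.symm.injective
  simp only [OrderIso.map_inf, RingEquiv.idealComapOrderIso_symm_apply, hΦ, Ideal.map_sup, hincl]
  rw [nIdeal_eq_span_X_compl_range k hmn.le, map_splitRangeEquiv_frobPow_span_X he]
  simp only [Φ, map_splitRangeEquiv_map_rename]
  exact map_C_sup_powXIdeal_inf I K

/-- in characteristic `2`, with `R = k[x_1,…,x_m,y_1,…,y_m] ⊆ S =
k[x_1,…,x_n,y_1,…,y_n]` and `𝔫 = ({x_i, y_i : m+1 ≤ i ≤ n}) ⊆ S`, for any ideals `I, K`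
of `R` one has `(IS + 𝔫^{[2]}) ∩ (KS + 𝔫^{[2]}) = (I ∩ K)S + 𝔫^{[2]}`. -/
theorem distributivity_intersection_with_sum (k : Type*) [Field k] [CharP k 2]
    (m n : ℕ) (hm : 1 ≤ m) (hmn : m < n)
    (I K : Ideal (MvPolynomial (Fin m ⊕ Fin m) k)) :
    (Ideal.map (incl k m n hmn.le) I ⊔ frobPow (nIdeal k m n) 2) ⊓
        (Ideal.map (incl k m n hmn.le) K ⊔ frobPow (nIdeal k m n) 2)
      = Ideal.map (incl k m n hmn.le) (I ⊓ K) ⊔ frobPow (nIdeal k m n) 2 :=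
  distributivity_intersection_with_sum_general k m n hmn I K

end BEI
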